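/- arXiv:2010.07236 — 2 statements merged into one kernel-verified Lean document; each statement's English description precedes it below -/
import Mathlib

section
/- Fix real numbers a, b ∈ [0,1] with a < b, and set p := 1/a, q := 1/b (with 1/0 := ∞). Suppose (S_θ)_{θ≥1} is a family of linear operators S_θ : ℓ^p(ℕ) → ℓ^q(ℕ) such that ‖S_θ x‖_{ℓ^q} ≤ A θ^{b−a} ‖x‖_{ℓ^p} for all x ∈ ℓ^p and θ ≥ 1, for some constant A > 0. Then there is no constant B > 0 such that ‖x − S_θ x‖_{ℓ^p} ≤ B θ^{−(b−a)} ‖x‖_{ℓ^q} for all x ∈ ℓ^q and all θ ≥ 1. In other words, the scale of ℓ^p spaces does not admit any family of smoothing operators. -/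
/- STATEMENT 9: The scale of `ℓ^p` spaces does not admit smoothing operators.
The space `ℓ^{1/e}` (for `e ∈ [0,1]`, with `1/0 := ∞`) is described by the
membership predicate `seqMem e` and the norm `seqNorm e`. -/

open scoped BigOperators

noncomputable section

/-- The `ℓ^{1/e}` norm of a sequence, `e ∈ [0,1]` (`e = 0` gives `ℓ^∞`). -/
def seqNorm (e : ℝ) (x : ℕ → ℂ) : ℝ :=
  if e = 0 then ⨆ k, ‖x k‖ else (∑' k, ‖x k‖ ^ (1 / e)) ^ e

/-- Membership in `ℓ^{1/e}`. -/
def seqMem (e : ℝ) (x : ℕ → ℂ) : Prop :=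
  if e = 0 then BddAbove (Set.range fun k => ‖x k‖)
  else Summable fun k => ‖x k‖ ^ (1 / e)

/-!
Test `S_θ` on the sign vectors `ε ∈ {±1}^N` supported on `{0, …, N-1}`. Averaging
`ε_k (S_θ ε)_k` over all signs isolates the diagonal `c_k = (S_θ e_k)_k`, so convexity of the
`ℓ^q` norm (`q ≥ 1`) and the first estimate give `‖(c_k)_{k<N}‖_{ℓ^q} ≤ A θ^{b-a} N^a`.
The second estimate, applied to the unit vectors `e_k` at a `θ` with `B θ^{-(b-a)} ≤ 1/2`,
forces `|c_k| ≥ 1/2`, hence `N^b / 2 ≤ A θ^{b-a} N^a` for every `N`, which fails for large `N`.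
-/

open Filter Topology
open scoped ENNReal Matrix

section PiLp

variable {p : ℝ≥0∞} {ι : Type*} [Fintype ι]

theorem PiLp.norm_mono {β γ : ι → Type*} [∀ i, SeminormedAddCommGroup (β i)]
    [∀ i, SeminormedAddCommGroup (γ i)] (hp : p ≠ 0) {x : PiLp p β} {y : PiLp p γ}
    (h : ∀ i, ‖x i‖ ≤ ‖y i‖) : ‖x‖ ≤ ‖y‖ := by
  obtain (rfl | rfl | hp) := p.trichotomy
  · exact absurd rfl hp
  · rw [PiLp.norm_eq_ciSup, PiLp.norm_eq_ciSup]
    exact ciSup_mono (Set.finite_range _).bddAbove h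
  · rw [PiLp.norm_eq_sum hp, PiLp.norm_eq_sum hp]
    gcongr with i
    exact h i

theorem PiLp.card_rpow_mul_le_norm [Fact (1 ≤ p)] {β : ι → Type*}
    [∀ i, SeminormedAddCommGroup (β i)] (hp : p ≠ ∞) {c : ℝ} {x : ∀ i, β i}
    (h : ∀ i, c ≤ ‖x i‖) :
    (Fintype.card ι : ℝ) ^ (1 / p).toReal * c ≤ ‖WithLp.toLp p x‖ := by
  rcases lt_or_ge c 0 with hc | hc
  · exact (mul_nonpos_of_nonneg_of_nonpos (by positivity) hc.le).trans (norm_nonneg _)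
  · calc (Fintype.card ι : ℝ) ^ (1 / p).toReal * c
        = ‖WithLp.toLp p (Function.const ι c)‖ := by
          rw [PiLp.norm_toLp_const hp, Real.norm_of_nonneg hc, NNReal.coe_natCast]
      _ ≤ ‖WithLp.toLp p x‖ :=
          PiLp.norm_mono (zero_lt_one.trans_le (Fact.out : 1 ≤ p)).ne' fun i => by
            simpa [abs_of_nonneg hc] using h i

theorem RCLike.norm_intCast_units {𝕜 : Type*} [RCLike 𝕜] (u : ℤˣ) :
    ‖((u : ℤ) : 𝕜)‖ = 1 := by
  rcases Int.units_eq_one_or u with rfl | rfl <;> simp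

variable [DecidableEq ι]

theorem sum_units_int_apply_mul_apply (i j : ι) :
    ∑ ε : ι → ℤˣ, ((ε i * ε j : ℤˣ) : ℤ) =
      if i = j then (Fintype.card (ι → ℤˣ) : ℤ) else 0 := by
  split_ifs with hij
  · simp [hij]
  · -- flipping the sign of `ε i` negates every term
    have flip := Fintype.sum_equiv (Equiv.mulRight (Pi.mulSingle i (-1)))
      (fun ε : ι → ℤˣ => ((ε i * ε j : ℤˣ) : ℤ)) (fun ε => -((ε i * ε j : ℤˣ) : ℤ))
      fun ε => by simp [Ne.symm hij]
    rw [Finset.sum_neg_distrib] at flip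
    linarith

theorem Matrix.norm_toLp_diag_le {𝕜 : Type*} [RCLike 𝕜] [Fact (1 ≤ p)] (c : Matrix ι ι 𝕜)
    {R : ℝ} (hc : ∀ ε : ι → ℤˣ, ‖WithLp.toLp p (c *ᵥ fun i => ((ε i : ℤ) : 𝕜))‖ ≤ R) :
    ‖WithLp.toLp p c.diag‖ ≤ R := by
  set s : (ι → ℤˣ) → ι → 𝕜 := fun ε i => ((ε i : ℤ) : 𝕜)
  set M := Fintype.card (ι → ℤˣ)
  have hsum : (M : 𝕜) • c.diag = ∑ ε, s ε * (c *ᵥ s ε) := by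
    ext k
    calc (M : 𝕜) * c k k
        = ∑ n, c k n * ((∑ ε : ι → ℤˣ, ((ε k * ε n : ℤˣ) : ℤ) : ℤ) : 𝕜) := by
          simp only [sum_units_int_apply_mul_apply, Int.cast_ite, Int.cast_natCast,
            Int.cast_zero, mul_ite, mul_zero, Finset.sum_ite_eq, Finset.mem_univ, if_true]
          exact mul_comm _ _
      _ = ∑ ε, s ε k * ∑ n, c k n * s ε n := by
          simp only [Finset.mul_sum, Int.cast_sum, Units.val_mul, Int.cast_mul, s]
          rw [Finset.sum_comm]
          exact Fintype.sum_congr _ _ fun ε => Fintype.sum_congr _ _ fun n => by ring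
      _ = (∑ ε, s ε * (c *ᵥ s ε)) k := by
          simp only [Finset.sum_apply, Pi.mul_apply, Matrix.mulVec, dotProduct]
  have hM : (0 : ℝ) < M := by exact_mod_cast Fintype.card_pos
  have hp : p ≠ 0 := (zero_lt_one.trans_le (Fact.out : 1 ≤ p)).ne'
  refine le_of_mul_le_mul_left ?_ hM
  calc (M : ℝ) * ‖WithLp.toLp p c.diag‖ = ‖WithLp.toLp p ((M : 𝕜) • c.diag)‖ := by
        rw [WithLp.toLp_smul, norm_smul, RCLike.norm_natCast]
    _ = ‖∑ ε, WithLp.toLp p (s ε * (c *ᵥ s ε))‖ := by rw [hsum, WithLp.toLp_sum]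
    _ ≤ ∑ ε, ‖WithLp.toLp p (s ε * (c *ᵥ s ε))‖ := norm_sum_le _ _
    _ ≤ ∑ ε : ι → ℤˣ, R := Finset.sum_le_sum fun ε _ =>
        (PiLp.norm_mono hp fun i => by simp [s, RCLike.norm_intCast_units]).trans (hc ε)
    _ = M * R := by simp [M]

end PiLp

theorem Function.Injective.extend_single_zero {α β M : Type*} [DecidableEq α] [DecidableEq β]
    [Zero M] {f : α → β} (hf : Function.Injective f) (i : α) (m : M) :
    Function.extend f (Pi.single i m) 0 = Pi.single (f i) m := by
  funext k
  by_cases hk : ∃ i', f i' = k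
  · obtain ⟨i', rfl⟩ := hk
    simp only [hf.extend_apply, Pi.single_apply, hf.eq_iff]
  · rw [Function.extend_apply' _ _ _ hk, Pi.zero_apply, Pi.single_eq_of_ne]
    rintro rfl
    exact hk ⟨i, rfl⟩

theorem exists_one_le_mul_rpow_neg_le {s : ℝ} (hs : 0 < s) (B : ℝ) {ε : ℝ} (hε : 0 < ε) :
    ∃ θ : ℝ, 1 ≤ θ ∧ B * θ ^ (-s) ≤ ε := by
  have hlim : Tendsto (fun θ : ℝ => B * θ ^ (-s)) atTop (𝓝 0) := by
    simpa using (tendsto_rpow_neg_atTop hs).const_mul B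
  exact ((eventually_ge_atTop 1).and (hlim.eventually (eventually_le_nhds hε))).exists

theorem exists_nat_mul_rpow_lt_rpow {a b : ℝ} (hab : a < b) (C : ℝ) :
    ∃ N : ℕ, 0 < N ∧ C * (N : ℝ) ^ a < (N : ℝ) ^ b := by
  have hlim : Tendsto (fun N : ℕ => (N : ℝ) ^ (b - a)) atTop atTop :=
    (tendsto_rpow_atTop (sub_pos.2 hab)).comp tendsto_natCast_atTop_atTop
  obtain ⟨N, hN, hC⟩ := ((eventually_gt_atTop 0).and (hlim.eventually_gt_atTop C)).exists
  have hN' : (0 : ℝ) < N := by exact_mod_cast hN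
  refine ⟨N, hN, ?_⟩
  calc C * (N : ℝ) ^ a < (N : ℝ) ^ (b - a) * (N : ℝ) ^ a :=
        mul_lt_mul_of_pos_right hC (Real.rpow_pos_of_pos hN' a)
    _ = (N : ℝ) ^ b := by rw [← Real.rpow_add hN', sub_add_cancel]

/-- The exponent `1 / e` of `seqMem e`; `e = 0` gives `∞` because `0⁻¹ = ∞` in `ℝ≥0∞`. -/
def seqExponent (e : ℝ) : ℝ≥0∞ := (ENNReal.ofReal e)⁻¹

section SeqSpace

variable {e : ℝ} {x : ℕ → ℂ}

theorem seqExponent_zero : seqExponent 0 = ∞ := by simp [seqExponent]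

theorem toReal_seqExponent (he : 0 < e) : (seqExponent e).toReal = 1 / e := by
  simp [seqExponent, ENNReal.toReal_inv, he.le]

theorem seqExponent_ne_top (he : 0 < e) : seqExponent e ≠ ∞ :=
  ENNReal.inv_ne_top.2 (ENNReal.ofReal_pos.2 he).ne'

theorem toReal_one_div_seqExponent (he : 0 ≤ e) : (1 / seqExponent e).toReal = e := by
  simp [seqExponent, he]

theorem seqExponent_anti {a b : ℝ} (hab : a ≤ b) : seqExponent b ≤ seqExponent a :=
  ENNReal.inv_le_inv.2 (ENNReal.ofReal_le_ofReal hab)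

theorem one_le_seqExponent (he : e ≤ 1) : 1 ≤ seqExponent e :=
  ENNReal.one_le_inv.2 (ENNReal.ofReal_le_one.2 he)

theorem seqMem_iff_memℓp (he : 0 ≤ e) : seqMem e x ↔ Memℓp x (seqExponent e) := by
  unfold seqMem
  split_ifs with h
  · rw [h, seqExponent_zero, memℓp_infty_iff]
  · have he : 0 < e := he.lt_of_ne' h
    rw [memℓp_gen_iff (by rw [toReal_seqExponent he]; positivity), toReal_seqExponent he]

theorem seqNorm_eq_norm (he : 0 ≤ e) (hx : Memℓp x (seqExponent e)) :
    seqNorm e x = ‖(⟨x, hx⟩ : lp (fun _ : ℕ => ℂ) (seqExponent e))‖ := by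
  unfold seqNorm
  split_ifs with h
  · subst h
    generalize hp : seqExponent 0 = p at hx ⊢
    rw [seqExponent_zero] at hp
    subst hp
    rfl
  · have he : 0 < e := he.lt_of_ne' h
    rw [lp.norm_eq_tsum_rpow (by rw [toReal_seqExponent he]; positivity), toReal_seqExponent he,
      one_div_one_div]

theorem seqMem.sub {y : ℕ → ℂ} (he : 0 ≤ e) (hx : seqMem e x) (hy : seqMem e y) :
    seqMem e (x - y) := by
  rw [seqMem_iff_memℓp he] at *
  exact hx.sub hy

theorem seqMem.of_le {a b : ℝ} (ha : 0 ≤ a) (hab : a ≤ b) (hx : seqMem b x) : seqMem a x := by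
  rw [seqMem_iff_memℓp ha]
  rw [seqMem_iff_memℓp (ha.trans hab)] at hx
  exact hx.of_exponent_ge (seqExponent_anti hab)

theorem norm_apply_le_seqNorm (he : 0 ≤ e) (hx : seqMem e x) (k : ℕ) :
    ‖x k‖ ≤ seqNorm e x := by
  rw [seqMem_iff_memℓp he] at hx
  rw [seqNorm_eq_norm he hx]
  exact lp.norm_apply_le_norm (ENNReal.inv_ne_zero.2 ENNReal.ofReal_ne_top)
    (⟨x, hx⟩ : lp (fun _ : ℕ => ℂ) (seqExponent e)) k

theorem norm_toLp_le_seqNorm (he : 0 < e) (hx : seqMem e x) (N : ℕ) :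
    ‖WithLp.toLp (seqExponent e) (fun k : Fin N => x k)‖ ≤ seqNorm e x := by
  unfold seqMem at hx
  unfold seqNorm
  rw [if_neg he.ne'] at hx ⊢
  rw [PiLp.norm_eq_sum (by rw [toReal_seqExponent he]; positivity), toReal_seqExponent he,
    one_div_one_div, Fin.sum_univ_eq_sum_range (fun k => ‖x k‖ ^ (1 / e))]
  gcongr
  exact hx.sum_le_tsum _ fun k _ => by positivity

theorem seqMem_of_norm_eq_indicator {T : Finset ℕ}
    (hx : ∀ k, ‖x k‖ = if k ∈ T then 1 else 0) (he : 0 ≤ e) : seqMem e x := by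
  rw [seqMem_iff_memℓp he]
  refine (memℓp_zero (T.finite_toSet.subset fun k hk => Finset.mem_coe.2 ?_)).of_exponent_ge
    bot_le
  by_contra hkT
  exact hk (norm_eq_zero.1 (by simpa [hkT] using hx k))

theorem seqNorm_of_norm_eq_indicator {T : Finset ℕ}
    (hx : ∀ k, ‖x k‖ = if k ∈ T then 1 else 0) (he : 0 ≤ e) (hT : T.Nonempty) :
    seqNorm e x = (T.card : ℝ) ^ e := by
  unfold seqNorm
  simp only [hx]
  split_ifs with h
  · obtain ⟨k, hk⟩ := hT
    have hle : ∀ j, (if j ∈ T then (1 : ℝ) else 0) ≤ 1 := fun j => by split_ifs <;> norm_num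
    rw [h, Real.rpow_zero]
    have hbdd : BddAbove (Set.range fun j => if j ∈ T then (1 : ℝ) else 0) :=
      ⟨1, by rintro _ ⟨j, rfl⟩; exact hle j⟩
    exact le_antisymm (ciSup_le hle) (le_ciSup_of_le hbdd k (by simp [hk]))
  · have he : 0 < e := he.lt_of_ne' h
    rw [tsum_eq_sum (s := T) fun k hk => by simp [hk, he.ne'],
      Finset.sum_congr rfl fun k hk => by rw [if_pos hk, Real.one_rpow]]
    simp

end SeqSpace

section Compression

variable {R : Type*} [CommSemiring R] (T : (ℕ → R) →ₗ[R] ℕ → R) (N : ℕ)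

def compression : Matrix (Fin N) (Fin N) R :=
  LinearMap.toMatrix'
    (LinearMap.funLeft R R Fin.val ∘ₗ T ∘ₗ Function.ExtendByZero.linearMap R Fin.val)

theorem compression_mulVec (v : Fin N → R) :
    compression T N *ᵥ v = fun k : Fin N => T (Function.extend Fin.val v 0) k :=
  LinearMap.toMatrix'_mulVec _ v

theorem compression_diag (k : Fin N) : (compression T N).diag k = T (Pi.single k 1) k := by
  show T (Function.extend Fin.val (Pi.single k 1) 0) k = _
  rw [Fin.val_injective.extend_single_zero]

end Compression

theorem norm_extend_units_int {𝕜 : Type*} [RCLike 𝕜] {N : ℕ} (ε : Fin N → ℤˣ)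
    (k : ℕ) :
    ‖Function.extend Fin.val (fun n => ((ε n : ℤ) : 𝕜)) 0 k‖ =
      if k ∈ Finset.range N then 1 else 0 := by
  by_cases hk : k < N
  · rw [show k = (⟨k, hk⟩ : Fin N) from rfl, Fin.val_injective.extend_apply]
    simp [hk, RCLike.norm_intCast_units]
  · rw [Function.extend_apply' _ _ _ (by rintro ⟨i, rfl⟩; exact hk i.isLt)]
    simp [hk]

section Operator

variable {a b : ℝ} {T : (ℕ → ℂ) →ₗ[ℂ] ℕ → ℂ}

theorem one_sub_le_norm_apply_single (ha : 0 ≤ a) (hab : a ≤ b)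
    (hT : ∀ x, seqMem a x → seqMem b (T x)) {δ : ℝ}
    (hδ : ∀ x, seqMem b x → seqNorm a (x - T x) ≤ δ * seqNorm b x) (n : ℕ) :
    1 - δ ≤ ‖T (Pi.single n 1) n‖ := by
  set e : ℕ → ℂ := Pi.single n 1
  have he : ∀ k, ‖e k‖ = if k ∈ ({n} : Finset ℕ) then 1 else 0 := fun k => by
    by_cases hk : k = n <;> simp [e, hk]
  have hb : 0 ≤ b := ha.trans hab
  have heb : seqMem b e := seqMem_of_norm_eq_indicator he hb
  have hdiff : seqMem a (e - T e) :=
    (heb.sub hb (hT e (seqMem_of_norm_eq_indicator he ha))).of_le ha hab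
  have hclose : seqNorm a (e - T e) ≤ δ := by
    simpa [seqNorm_of_norm_eq_indicator he hb (Finset.singleton_nonempty n)] using hδ e heb
  have hcoord : ‖1 - T e n‖ ≤ δ := by
    simpa [e] using (norm_apply_le_seqNorm ha hdiff n).trans hclose
  have := norm_sub_norm_le (1 : ℂ) (T e n)
  rw [norm_one] at this
  linarith

theorem norm_toLp_diag_compression_le (ha : 0 ≤ a) (hb : 0 < b) (hb₁ : b ≤ 1)
    (hT : ∀ x, seqMem a x → seqMem b (T x)) {C : ℝ}
    (hC : ∀ x, seqMem a x → seqNorm b (T x) ≤ C * seqNorm a x) {N : ℕ} (hN : 0 < N) :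
    ‖WithLp.toLp (seqExponent b) (compression T N).diag‖ ≤ C * (N : ℝ) ^ a := by
  have : Fact (1 ≤ seqExponent b) := ⟨one_le_seqExponent hb₁⟩
  refine Matrix.norm_toLp_diag_le _ fun ε => ?_
  set x := Function.extend Fin.val (fun n => ((ε n : ℤ) : ℂ)) 0
  have hx : ∀ k, ‖x k‖ = if k ∈ Finset.range N then 1 else 0 := norm_extend_units_int ε
  have hxa : seqMem a x := seqMem_of_norm_eq_indicator hx ha
  rw [compression_mulVec]
  calc _ ≤ seqNorm b (T x) := norm_toLp_le_seqNorm hb (hT x hxa) N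
    _ ≤ C * seqNorm a x := hC x hxa
    _ = C * (N : ℝ) ^ a := by
        rw [seqNorm_of_norm_eq_indicator hx ha (Finset.nonempty_range_iff.2 hN.ne'),
          Finset.card_range]

end Operator

theorem lp_scale_admits_no_smoothing_general
    (a b : ℝ) (ha : 0 ≤ a) (hab : a < b) (hb : b ≤ 1)
    (S : ℝ → (ℕ → ℂ) →ₗ[ℂ] (ℕ → ℂ)) (A : ℝ)
    -- each `S θ` maps `ℓ^p` (p = 1/a) into `ℓ^q` (q = 1/b) …
    (hmap : ∀ θ : ℝ, 1 ≤ θ → ∀ x, seqMem a x → seqMem b (S θ x))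
    -- … with the bound `‖S_θ x‖_{ℓ^q} ≤ A θ^{b−a} ‖x‖_{ℓ^p}`
    (hS1 : ∀ θ : ℝ, 1 ≤ θ → ∀ x, seqMem a x →
      seqNorm b (S θ x) ≤ A * θ ^ (b - a) * seqNorm a x) :
    -- then no constant `B > 0` realizes the second smoothing inequality
    ¬ ∃ B : ℝ, 0 < B ∧ ∀ θ : ℝ, 1 ≤ θ → ∀ x, seqMem b x →
        seqNorm a (x - S θ x) ≤ B * θ ^ (-(b - a)) * seqNorm b x := by
  rintro ⟨B, -, hsmooth⟩
  have hb₀ : 0 < b := ha.trans_lt hab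
  have : Fact (1 ≤ seqExponent b) := ⟨one_le_seqExponent hb⟩
  obtain ⟨θ, hθ, hθB⟩ := exists_one_le_mul_rpow_neg_le (sub_pos.2 hab) B one_half_pos
  obtain ⟨N, hN, hNlarge⟩ := exists_nat_mul_rpow_lt_rpow hab (2 * (A * θ ^ (b - a)))
  have hdiag : ∀ k : Fin N, 1 / 2 ≤ ‖(compression (S θ) N).diag k‖ := fun k => by
    rw [compression_diag]
    linarith [one_sub_le_norm_apply_single ha hab.le (hmap θ hθ) (hsmooth θ hθ) k]
  have hlower : (N : ℝ) ^ b * (1 / 2) ≤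
      ‖WithLp.toLp (seqExponent b) (compression (S θ) N).diag‖ := by
    simpa only [Fintype.card_fin, toReal_one_div_seqExponent hb₀.le] using
      PiLp.card_rpow_mul_le_norm (seqExponent_ne_top hb₀) hdiag
  have hupper := norm_toLp_diag_compression_le ha hb₀ hb (hmap θ hθ) (hS1 θ hθ) hN
  linarith

theorem lp_scale_admits_no_smoothing
    (a b : ℝ) (ha : 0 ≤ a) (hab : a < b) (hb : b ≤ 1)
    (S : ℝ → (ℕ → ℂ) →ₗ[ℂ] (ℕ → ℂ)) (A : ℝ) (hA : 0 < A)
    -- each `S θ` maps `ℓ^p` (p = 1/a) into `ℓ^q` (q = 1/b) …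
    (hmap : ∀ θ : ℝ, 1 ≤ θ → ∀ x, seqMem a x → seqMem b (S θ x))
    -- … with the bound `‖S_θ x‖_{ℓ^q} ≤ A θ^{b−a} ‖x‖_{ℓ^p}`
    (hS1 : ∀ θ : ℝ, 1 ≤ θ → ∀ x, seqMem a x →
      seqNorm b (S θ x) ≤ A * θ ^ (b - a) * seqNorm a x) :
    -- then no constant `B > 0` realizes the second smoothing inequality
    ¬ ∃ B : ℝ, 0 < B ∧ ∀ θ : ℝ, 1 ≤ θ → ∀ x, seqMem b x →
        seqNorm a (x - S θ x) ≤ B * θ ^ (-(b - a)) * seqNorm b x :=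
  lp_scale_admits_no_smoothing_general a b ha hab hb S A hmap hS1
end
end

section
/- With ψ, ψ_θ, S_θ as above (so that ∫ψ_θ = 1 and ∫ x^α ψ_θ(x) dx = 0 for all multi-indices α ≠ 0), for all integers 0 ≤ a < b, there is a constant C depending only on d, a, b such that for all u ∈ C^b_b(ℝᵈ, ℂ) and θ ≥ 1: ‖u − S_θ u‖_{C^a} ≤ C θ^{−(b−a)} ‖u‖_{C^b}. -/
/-!
At a point `x`, `u x - S_θ u x = ∫ ψ_θ z • (u x - u (x - z)) dz` because `∫ ψ_θ = 1`. Expanding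
`u (x - z)` by Taylor's formula of order `b` around `x`, every term of positive degree is a
multilinear form in `z` and integrates to zero against `ψ_θ`, since all moments of `ψ_θ` vanish;
only the remainder, bounded by `‖D^b u‖ ‖z‖^b`, survives. Rescaling gives
`∫ ‖z‖^b |ψ_θ z| dz = θ^(-b) ∫ ‖z‖^b |ψ z| dz`, which settles the case `a = 0`. Derivatives commute
with convolution against the integrable kernel `ψ_θ` (differentiation under the integral sign, the
derivatives of `u` being bounded), so `D^m (u - S_θ u) = D^m u - S_θ (D^m u)`, and the case `a = 0`
applied to `D^m u`, which is of class `C^(b-m)`, bounds it by `θ^(-(b-m)) ≤ θ^(-(b-a))` times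
`‖u‖_{C^b}` for every `m ≤ a`.
-/

open scoped BigOperators

noncomputable section

/-- The rescaled kernel `ψ_θ(x) = θᵈ ψ(θ x)`. -/
def scaledKer (d : ℕ) (ψ : EuclideanSpace ℝ (Fin d) → ℝ) (θ : ℝ) :
    EuclideanSpace ℝ (Fin d) → ℝ :=
  fun x => θ ^ d * ψ (θ • x)

/-- The smoothing operator `S_θ u = u ∗ ψ_θ`. -/
def smoothOp (d : ℕ) (ψ : EuclideanSpace ℝ (Fin d) → ℝ) (θ : ℝ)
    (u : EuclideanSpace ℝ (Fin d) → ℂ) : EuclideanSpace ℝ (Fin d) → ℂ :=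
  fun x => ∫ y : EuclideanSpace ℝ (Fin d), scaledKer d ψ θ (x - y) • u y

/-- The `C^k` norm `max_{m ≤ k} sup_x ‖D^m u(x)‖`. -/
def cNorm (d k : ℕ) (u : EuclideanSpace ℝ (Fin d) → ℂ) : ℝ :=
  ⨆ m : Fin (k + 1), ⨆ x : EuclideanSpace ℝ (Fin d), ‖iteratedFDeriv ℝ (m : ℕ) u x‖

open MeasureTheory
open scoped Convolution
open ContinuousLinearMap (lsmul)

variable {E G : Type*} [NormedAddCommGroup E] [NormedAddCommGroup G] [NormedSpace ℝ G]

section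

variable [NormedSpace ℝ E]

theorem ContinuousMultilinearMap.norm_apply_const_le {k : ℕ}
    (M : ContinuousMultilinearMap ℝ (fun _ : Fin k => E) G) (y : E) :
    ‖M (fun _ => y)‖ ≤ ‖M‖ * ‖y‖ ^ k :=
  M.le_opNorm_mul_pow_of_le (pi_norm_const_le y)

theorem norm_iteratedFDeriv_iteratedFDeriv (f : E → G) (k m : ℕ) (x : E) :
    ‖iteratedFDeriv ℝ k (iteratedFDeriv ℝ m f) x‖ = ‖iteratedFDeriv ℝ (k + m) f x‖ := by
  induction m generalizing k with
  | zero => simp [iteratedFDeriv_zero_eq_comp, LinearIsometryEquiv.norm_iteratedFDeriv_comp_left]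
  | succ m ih =>
    have hcurry := LinearIsometryEquiv.norm_iteratedFDeriv_comp_left (𝕜 := ℝ) (E := E)
      (F := E →L[ℝ] E [×m]→L[ℝ] G) (G := E [×m + 1]→L[ℝ] G)
      (continuousMultilinearCurryLeftEquiv ℝ (fun _ : Fin (m + 1) => E) G).symm
      (fderiv ℝ (iteratedFDeriv ℝ m f)) x k
    rw [iteratedFDeriv_succ_eq_comp_left, hcurry, norm_iteratedFDeriv_fderiv, ih, add_right_comm,
      add_assoc]

theorem norm_sub_taylor_le [CompleteSpace G] {v : E → G} {n : ℕ} {K : ℝ}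
    (hv : ContDiff ℝ (n + 1) v) (hK : ∀ y, ‖iteratedFDeriv ℝ (n + 1) v y‖ ≤ K) (x y : E) :
    ‖v (x + y) - ∑ k ∈ Finset.range (n + 1),
        (k.factorial : ℝ)⁻¹ • iteratedFDeriv ℝ k v x (fun _ => y)‖ ≤ K * ‖y‖ ^ (n + 1) := by
  have hrem := intervalIntegral.norm_integral_le_of_norm_le_const (a := 0) (b := 1)
    (C := K * ‖y‖ ^ (n + 1))
    (f := fun t => (1 - t) ^ n • iteratedFDeriv ℝ (n + 1) v (x + t • y) (fun _ => y))
    fun t ht => by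
      rw [Set.uIoc_of_le zero_le_one] at ht
      have h1t : 0 ≤ 1 - t := by linarith [ht.2]
      rw [norm_smul, norm_pow, Real.norm_of_nonneg h1t]
      calc (1 - t) ^ n * ‖iteratedFDeriv ℝ (n + 1) v (x + t • y) (fun _ => y)‖
          ≤ 1 * (K * ‖y‖ ^ (n + 1)) := by
            gcongr
            · exact pow_le_one₀ h1t (by linarith [ht.1])
            · exact (ContinuousMultilinearMap.norm_apply_const_le _ y).trans (by gcongr; exact hK _)
        _ = K * ‖y‖ ^ (n + 1) := one_mul _
  rw [sub_zero, abs_one, mul_one] at hrem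
  rw [map_add_eq_sum_add_integral_iteratedFDeriv fun t _ => hv.contDiffAt, add_sub_cancel_left,
    norm_smul, norm_inv, Real.norm_natCast]
  calc (n.factorial : ℝ)⁻¹ * _ ≤ 1 * (K * ‖y‖ ^ (n + 1)) := by
        gcongr
        exact inv_le_one_of_one_le₀ (mod_cast n.factorial_pos)
    _ = K * ‖y‖ ^ (n + 1) := one_mul _

end

section Kernel

variable [MeasurableSpace E] {μ : Measure E} {φ : E → ℝ}

theorem ContinuousLinearMap.map_convolution_lsmul [CompleteSpace G] {G' : Type*}
    [NormedAddCommGroup G'] [NormedSpace ℝ G'] [CompleteSpace G'] (L : G →L[ℝ] G') {w : E → G}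
    {x : E}
    (hint : Integrable (fun t => φ t • w (x - t)) μ) :
    L ((φ ⋆[lsmul ℝ ℝ, μ] w) x) = (φ ⋆[lsmul ℝ ℝ, μ] (L ∘ w)) x := by
  simp only [convolution_lsmul, ← L.integral_comp_comm hint, map_smul, Function.comp_apply]

variable [BorelSpace E] [SecondCountableTopology E]

theorem integrable_smul_of_norm_le_mul_pow (hφ : AEStronglyMeasurable φ μ) {k : ℕ}
    (hint : Integrable (fun t => ‖t‖ ^ k * φ t) μ) {f : E → G} (hf : Continuous f) {C : ℝ}
    (hC : ∀ t, ‖f t‖ ≤ C * ‖t‖ ^ k) : Integrable (fun t => φ t • f t) μ := by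
  refine (hint.norm.const_mul C).mono' (hφ.smul hf.aestronglyMeasurable) (ae_of_all _ fun t => ?_)
  rw [norm_smul, norm_mul, norm_pow, norm_norm, Real.norm_eq_abs]
  calc |φ t| * ‖f t‖ ≤ |φ t| * (C * ‖t‖ ^ k) := by gcongr; exact hC t
    _ = C * (‖t‖ ^ k * |φ t|) := by ring

theorem integrable_smul_comp_sub (hφ : Integrable φ μ) {w : E → G} (hw : Continuous w) {C : ℝ}
    (hC : ∀ y, ‖w y‖ ≤ C) (x : E) : Integrable (fun t => φ t • w (x - t)) μ :=
  hφ.smul_bdd C (by fun_prop) (ae_of_all _ fun t => hC _)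

variable [NormedSpace ℝ E]

theorem integrable_smul_multilinear (hφ : AEStronglyMeasurable φ μ) {k : ℕ}
    (hint : Integrable (fun t => ‖t‖ ^ k * φ t) μ)
    (M : ContinuousMultilinearMap ℝ (fun _ : Fin k => E) G) :
    Integrable (fun t => φ t • M (fun _ => t)) μ :=
  integrable_smul_of_norm_le_mul_pow hφ hint (by fun_prop) M.norm_apply_const_le

theorem hasFDerivAt_convolution_lsmul (hφ : Integrable φ μ) {w : E → G} (hw : ContDiff ℝ 1 w)
    {C C' : ℝ} (hC : ∀ y, ‖w y‖ ≤ C) (hC' : ∀ y, ‖fderiv ℝ w y‖ ≤ C') (x : E) :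
    HasFDerivAt (φ ⋆[lsmul ℝ ℝ, μ] w) ((φ ⋆[lsmul ℝ ℝ, μ] fderiv ℝ w) x) x := by
  have hw' : Continuous (fderiv ℝ w) := hw.continuous_fderiv one_ne_zero
  refine hasFDerivAt_integral_of_dominated_of_fderiv_le (bound := fun t => |φ t| * C')
    (F' := fun x t => φ t • fderiv ℝ w (x - t)) Filter.univ_mem
    (Filter.Eventually.of_forall fun y => (integrable_smul_comp_sub hφ hw.continuous hC y).1)
    (integrable_smul_comp_sub hφ hw.continuous hC x) (by fun_prop)
    (ae_of_all _ fun t y _ => ?_) (hφ.abs.mul_const C') (ae_of_all _ fun t y _ => ?_)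
  · rw [norm_smul, Real.norm_eq_abs]
    gcongr
    exact hC' _
  · exact ((hw.differentiable one_ne_zero (y - t)).hasFDerivAt.comp y
      ((hasFDerivAt_id y).sub_const t)).const_smul (φ t) |>.congr_fderiv (by simp)

variable [CompleteSpace G]

theorem integral_smul_sum_multilinear (hφ1 : ∫ t, φ t ∂μ = 1) {n : ℕ}
    (hint : ∀ k ≤ n, Integrable (fun t => ‖t‖ ^ k * φ t) μ)
    (hmom : ∀ k, 0 < k → k ≤ n → ∀ M : ContinuousMultilinearMap ℝ (fun _ : Fin k => E) G,
      ∫ t, φ t • M (fun _ => t) ∂μ = 0)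
    (M : ∀ k, ContinuousMultilinearMap ℝ (fun _ : Fin k => E) G) :
    ∫ t, φ t • ∑ k ∈ Finset.range (n + 1), M k (fun _ => t) ∂μ = M 0 0 := by
  have hφ : Integrable φ μ := by simpa using hint 0 n.zero_le
  simp_rw [Finset.smul_sum]
  rw [integral_finsetSum _ fun k hk => integrable_smul_multilinear hφ.aestronglyMeasurable
    (hint k (Finset.mem_range_succ_iff.mp hk)) (M k), Finset.sum_range_succ',
    Finset.sum_eq_zero fun k hk => hmom (k + 1) k.succ_pos (Finset.mem_range.mp hk) (M (k + 1)),
    zero_add]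
  simp_rw [Subsingleton.elim (fun _ : Fin 0 => _) 0]
  rw [integral_smul_const, hφ1, one_smul]

theorem norm_sub_convolution_lsmul_le (hφ1 : ∫ t, φ t ∂μ = 1) {n : ℕ}
    (hint : ∀ k ≤ n + 1, Integrable (fun t => ‖t‖ ^ k * φ t) μ)
    (hmom : ∀ k, 0 < k → k ≤ n → ∀ M : ContinuousMultilinearMap ℝ (fun _ : Fin k => E) G,
      ∫ t, φ t • M (fun _ => t) ∂μ = 0)
    {v : E → G} (hv : ContDiff ℝ (n + 1) v) {K : ℝ}
    (hK : ∀ y, ‖iteratedFDeriv ℝ (n + 1) v y‖ ≤ K) (x : E) :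
    ‖v x - (φ ⋆[lsmul ℝ ℝ, μ] v) x‖ ≤ K * ∫ t, ‖t‖ ^ (n + 1) * |φ t| ∂μ := by
  have hφ : AEStronglyMeasurable φ μ := by simpa using (hint 0 n.succ.zero_le).aestronglyMeasurable
  -- `M k (fun _ => t)` is the degree-`k` term of the Taylor expansion of `v (x - t)` at `t = 0`
  let M k : ContinuousMultilinearMap ℝ (fun _ : Fin k => E) G :=
    (k.factorial : ℝ)⁻¹ • (iteratedFDeriv ℝ k v x).compContinuousLinearMap
      fun _ => -ContinuousLinearMap.id ℝ E
  let P t := ∑ k ∈ Finset.range (n + 1), M k (fun _ => t)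
  have hP : ∫ t, φ t • P t ∂μ = v x := by
    rw [integral_smul_sum_multilinear hφ1 (fun k hk => hint k (by omega)) hmom M]
    simp [M]
  have hP_int : Integrable (fun t => φ t • P t) μ := by
    simp_rw [P, Finset.smul_sum]
    exact integrable_finsetSum _ fun k hk =>
      integrable_smul_multilinear hφ (hint k (by simp at hk; omega)) (M k)
  have htaylor t : ‖v (x - t) - P t‖ ≤ K * ‖t‖ ^ (n + 1) := by
    simpa [P, M, sub_eq_add_neg] using norm_sub_taylor_le hv hK x (-t)
  have hR_int : Integrable (fun t => φ t • (v (x - t) - P t)) μ :=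
    integrable_smul_of_norm_le_mul_pow hφ (hint (n + 1) le_rfl) (by fun_prop) htaylor
  have hv_int : Integrable (fun t => φ t • v (x - t)) μ :=
    (hP_int.add hR_int).congr (ae_of_all _ fun t => by simp [← smul_add])
  calc ‖v x - (φ ⋆[lsmul ℝ ℝ, μ] v) x‖ = ‖∫ t, φ t • (v (x - t) - P t) ∂μ‖ := by
        rw [convolution_lsmul, ← hP, ← integral_sub hP_int hv_int, ← norm_neg, ← integral_neg]
        simp_rw [neg_sub, smul_sub]
    _ ≤ ∫ t, K * (‖t‖ ^ (n + 1) * |φ t|) ∂μ := by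
        have hint' : Integrable (fun t => ‖t‖ ^ (n + 1) * |φ t|) μ := by
          simpa [abs_mul] using (hint _ le_rfl).norm
        refine norm_integral_le_of_norm_le (hint'.const_mul K) (ae_of_all _ fun t => ?_)
        rw [norm_smul, Real.norm_eq_abs]
        calc |φ t| * ‖v (x - t) - P t‖ ≤ |φ t| * (K * ‖t‖ ^ (n + 1)) := by gcongr; exact htaylor t
          _ = K * (‖t‖ ^ (n + 1) * |φ t|) := by ring
    _ = K * ∫ t, ‖t‖ ^ (n + 1) * |φ t| ∂μ := integral_const_mul _ _

theorem iteratedFDeriv_sub_convolution_lsmul (hφ : Integrable φ μ) {w : E → G} {n : ℕ}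
    (hw : ContDiff ℝ n w) {K : ℝ} (hK : ∀ k ≤ n, ∀ y, ‖iteratedFDeriv ℝ k w y‖ ≤ K) {m : ℕ}
    (hm : m ≤ n) :
    iteratedFDeriv ℝ m (w - φ ⋆[lsmul ℝ ℝ, μ] w) =
      iteratedFDeriv ℝ m w - φ ⋆[lsmul ℝ ℝ, μ] iteratedFDeriv ℝ m w := by
  induction m with
  | zero =>
    ext1 x
    simp only [iteratedFDeriv_zero_eq_comp, Function.comp_apply, Pi.sub_apply, map_sub]
    congr 1
    exact (continuousMultilinearCurryFin0 ℝ E G).symm.toContinuousLinearEquiv.toContinuousLinearMap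
      |>.map_convolution_lsmul
        (integrable_smul_comp_sub hφ hw.continuous (by simpa using hK 0 hm) x)
  | succ m ih =>
    have hDm : ContDiff ℝ 1 (iteratedFDeriv ℝ m w) := hw.iteratedFDeriv_right (by norm_cast; omega)
    have hfd y : ‖fderiv ℝ (iteratedFDeriv ℝ m w) y‖ ≤ K := by
      rw [norm_fderiv_iteratedFDeriv]; exact hK _ hm y
    ext1 x
    rw [iteratedFDeriv_succ_eq_comp_left, iteratedFDeriv_succ_eq_comp_left, ih (by omega)]
    simp only [Function.comp_apply, Pi.sub_apply]
    have hS := hasFDerivAt_convolution_lsmul hφ hDm (hK m (by omega)) hfd x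
    rw [fderiv_sub (hDm.differentiable one_ne_zero x) hS.differentiableAt, hS.fderiv]
    let L : (E →L[ℝ] E [×m]→L[ℝ] G) →L[ℝ] E [×m + 1]→L[ℝ] G :=
      (continuousMultilinearCurryLeftEquiv ℝ (fun _ : Fin (m + 1) => E) G).symm
        |>.toContinuousLinearEquiv.toContinuousLinearMap
    exact (L.map_sub _ _).trans (congrArg _ (L.map_convolution_lsmul
      (integrable_smul_comp_sub hφ (hDm.continuous_fderiv one_ne_zero) hfd x)))

end Kernel

section Euclidean

variable {d : ℕ}

theorem integral_smul_multilinear_eq_zero [CompleteSpace G] {k : ℕ}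
    {μ : Measure (EuclideanSpace ℝ (Fin d))} {φ : EuclideanSpace ℝ (Fin d) → ℝ}
    (hφ : AEStronglyMeasurable φ μ) (hint : Integrable (fun t => ‖t‖ ^ k * φ t) μ)
    (hmom : ∀ α : Fin d → ℕ, α ≠ 0 → ∫ t, (∏ i, t i ^ α i) * φ t ∂μ = 0) (hk : k ≠ 0)
    (M : ContinuousMultilinearMap ℝ (fun _ : Fin k => EuclideanSpace ℝ (Fin d)) G) :
    ∫ t, φ t • M (fun _ => t) ∂μ = 0 := by
  classical
  let c (f : Fin k → Fin d) : G := M fun j => EuclideanSpace.single (f j) 1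
  let α (f : Fin k → Fin d) (i : Fin d) : ℕ := (Finset.univ.filter fun j => f j = i).card
  have hexpand t : M (fun _ => t) = ∑ f, (∏ j, t (f j)) • c f := by
    conv_lhs => rw [← (EuclideanSpace.basisFun (Fin d) ℝ).sum_repr t]
    simp [M.map_sum, M.map_smul_univ, c]
  have hprod (f : Fin k → Fin d) (t : EuclideanSpace ℝ (Fin d)) :
      ∏ j, t (f j) = ∏ i, t i ^ α f i := by
    simp only [α, ← Finset.prod_const, Finset.prod_fiberwise']
  have hα f : α f ≠ 0 := fun h => hk <| by
    have hfib := Finset.card_eq_sum_card_fiberwise (s := Finset.univ) (t := Finset.univ)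
      fun j _ => Finset.mem_univ (f j)
    rw [Finset.card_univ, Fintype.card_fin] at hfib
    exact hfib.trans (Finset.sum_eq_zero fun i _ => congrFun h i)
  have hterm f : Integrable (fun t => φ t • (∏ j, t (f j)) • c f) μ := by
    refine integrable_smul_of_norm_le_mul_pow hφ hint (C := ‖c f‖) (by fun_prop) fun t => ?_
    rw [norm_smul, Real.norm_eq_abs, Finset.abs_prod, mul_comm]
    gcongr
    exact (Finset.prod_le_prod (fun _ _ => abs_nonneg _)
      fun j _ => PiLp.norm_apply_le t (f j)).trans (by simp)
  calc ∫ t, φ t • M (fun _ => t) ∂μ = ∑ f, ∫ t, φ t • (∏ j, t (f j)) • c f ∂μ := by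
        simp_rw [hexpand, Finset.smul_sum]
        exact integral_finsetSum _ fun f _ => hterm f
    _ = 0 := Finset.sum_eq_zero fun f _ => by
        simp_rw [smul_smul, hprod f, mul_comm (φ _)]
        rw [integral_smul_const, hmom _ (hα f), zero_smul]

end Euclidean

section ScaledKernel

variable {d k : ℕ} {θ : ℝ} {ψ g : EuclideanSpace ℝ (Fin d) → ℝ}

theorem integral_mul_scaledKer (hθ : 0 < θ) (hg : ∀ z, g (θ • z) = θ ^ k * g z) :
    ∫ z, g z * scaledKer d ψ θ z = (θ ^ k)⁻¹ * ∫ z, g z * ψ z := by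
  have hscale z : g z * scaledKer d ψ θ z = (θ ^ k)⁻¹ * θ ^ d * (g (θ • z) * ψ (θ • z)) := by
    rw [scaledKer, hg]; field_simp
  simp_rw [hscale]
  rw [integral_const_mul, Measure.integral_comp_smul volume (fun z => g z * ψ z) θ,
    finrank_euclideanSpace_fin, abs_of_pos (by positivity), smul_eq_mul]
  field_simp

theorem Integrable.mul_scaledKer (hθ : 0 < θ) (hg : ∀ z, g (θ • z) = θ ^ k * g z)
    (h : Integrable (fun z => g z * ψ z)) : Integrable (fun z => g z * scaledKer d ψ θ z) := by
  refine ((h.comp_smul hθ.ne').const_mul ((θ ^ k)⁻¹ * θ ^ d)).congr (ae_of_all _ fun z => ?_)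
  simp only [scaledKer, hg]
  field_simp

theorem abs_scaledKer (hθ : 0 < θ) (z : EuclideanSpace ℝ (Fin d)) :
    |scaledKer d ψ θ z| = scaledKer d (fun y => |ψ y|) θ z := by
  simp [scaledKer, abs_mul, abs_of_pos hθ]

theorem integral_scaledKer (hθ : 0 < θ) : ∫ z, scaledKer d ψ θ z = ∫ z, ψ z := by
  simpa using integral_mul_scaledKer (g := fun _ => 1) (k := 0) (ψ := ψ) hθ (by simp)

theorem integral_monomial_mul_scaledKer (hθ : 0 < θ) (α : Fin d → ℕ) :
    ∫ z, (∏ i, z i ^ α i) * scaledKer d ψ θ z =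
      (θ ^ ∑ i, α i)⁻¹ * ∫ z, (∏ i, z i ^ α i) * ψ z :=
  integral_mul_scaledKer hθ fun z => by
    simp [mul_pow, Finset.prod_mul_distrib, Finset.prod_pow_eq_pow_sum]

theorem integral_norm_pow_mul_abs_scaledKer (hθ : 0 < θ) (p : ℕ) :
    ∫ z, ‖z‖ ^ p * |scaledKer d ψ θ z| = (θ ^ p)⁻¹ * ∫ z, ‖z‖ ^ p * |ψ z| := by
  simp_rw [abs_scaledKer hθ]
  exact integral_mul_scaledKer hθ fun z => by rw [norm_smul_of_nonneg hθ.le, mul_pow]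

theorem SchwartzMap.integrable_norm_pow_mul_scaledKer
    (ψ : SchwartzMap (EuclideanSpace ℝ (Fin d)) ℝ) (hθ : 0 < θ) (p : ℕ) :
    Integrable (fun z => ‖z‖ ^ p * scaledKer d ψ θ z) := by
  refine Integrable.mul_scaledKer hθ (fun z => by rw [norm_smul_of_nonneg hθ.le, mul_pow]) ?_
  refine (integrable_norm_iff (by fun_prop)).mp ?_
  simpa [abs_mul] using ψ.integrable_pow_mul volume p

theorem smoothOp_eq_convolution (ψ : EuclideanSpace ℝ (Fin d) → ℝ) (θ : ℝ)
    (u : EuclideanSpace ℝ (Fin d) → ℂ) : smoothOp d ψ θ u = scaledKer d ψ θ ⋆[lsmul ℝ ℝ] u :=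
  funext fun _ => convolution_lsmul_swap.symm

theorem norm_iteratedFDeriv_sub_convolution_scaledKer_le [CompleteSpace G]
    (ψ : SchwartzMap (EuclideanSpace ℝ (Fin d)) ℝ) (hmean : ∫ x, ψ x = 1)
    (hmom : ∀ α : Fin d → ℕ, α ≠ 0 → ∫ x, (∏ i, x i ^ α i) * ψ x = 0) (hθ : 0 < θ) {b : ℕ}
    {u : EuclideanSpace ℝ (Fin d) → G} (hu : ContDiff ℝ b u) {K : ℝ}
    (hK : ∀ k ≤ b, ∀ y, ‖iteratedFDeriv ℝ k u y‖ ≤ K) {m : ℕ} (hm : m < b)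
    (x : EuclideanSpace ℝ (Fin d)) :
    ‖iteratedFDeriv ℝ m (u - scaledKer d ψ θ ⋆[lsmul ℝ ℝ] u) x‖ ≤
      K * ((θ ^ (b - m))⁻¹ * ∫ y, ‖y‖ ^ (b - m) * |ψ y|) := by
  obtain ⟨n, rfl⟩ : ∃ n, b = n + 1 + m := ⟨b - m - 1, by omega⟩
  have hint p := ψ.integrable_norm_pow_mul_scaledKer hθ p
  have hφ : Integrable (scaledKer d ψ θ) := by simpa using hint 0
  have hmomθ (α : Fin d → ℕ) (hα : α ≠ 0) : ∫ z, (∏ i, z i ^ α i) * scaledKer d ψ θ z = 0 := by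
    rw [integral_monomial_mul_scaledKer hθ, hmom α hα, mul_zero]
  rw [iteratedFDeriv_sub_convolution_lsmul hφ hu hK (by omega), Nat.add_sub_cancel,
    ← integral_norm_pow_mul_abs_scaledKer hθ]
  exact norm_sub_convolution_lsmul_le ((integral_scaledKer hθ).trans hmean) (fun k _ => hint k)
    (fun k hk _ M => integral_smul_multilinear_eq_zero hφ.1 (hint k) hmomθ hk.ne' M)
    (hu.iteratedFDeriv_right (by norm_cast))
    (fun y => (norm_iteratedFDeriv_iteratedFDeriv u _ m y).trans_le (hK _ le_rfl y)) x

end ScaledKernel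

section CNorm

variable {d k : ℕ} {u : EuclideanSpace ℝ (Fin d) → ℂ}

theorem norm_iteratedFDeriv_le_cNorm (hu : ∀ m ≤ k, ∃ K, ∀ x, ‖iteratedFDeriv ℝ m u x‖ ≤ K)
    {m : ℕ} (hm : m ≤ k) (x : EuclideanSpace ℝ (Fin d)) :
    ‖iteratedFDeriv ℝ m u x‖ ≤ cNorm d k u := by
  obtain ⟨K, hK⟩ := hu m hm
  exact (le_ciSup ⟨K, Set.forall_mem_range.2 hK⟩ x).trans
    (le_ciSup (f := fun j : Fin (k + 1) => ⨆ y, ‖iteratedFDeriv ℝ j u y‖)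
      (Set.finite_range _).bddAbove ⟨m, Nat.lt_succ_of_le hm⟩)

theorem cNorm_le {B : ℝ} (hB : 0 ≤ B) (h : ∀ m ≤ k, ∀ x, ‖iteratedFDeriv ℝ m u x‖ ≤ B) :
    cNorm d k u ≤ B :=
  Real.iSup_le (fun m => Real.iSup_le (h m (Nat.le_of_lt_succ m.isLt)) hB) hB

end CNorm

theorem inv_pow_le_rpow_neg {θ : ℝ} (hθ : 1 ≤ θ) {p : ℕ} {q : ℝ} (hq : q ≤ p) :
    (θ ^ p)⁻¹ ≤ θ ^ (-q) := by
  rw [← Real.rpow_natCast, ← Real.rpow_neg (by positivity)]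
  exact Real.rpow_le_rpow_of_exponent_le hθ (neg_le_neg hq)

theorem smoothing_Ck_remainder_estimate_general
    (d : ℕ) (ψ : SchwartzMap (EuclideanSpace ℝ (Fin d)) ℝ)
    -- `∫ ψ = 1`
    (hmean : ∫ x : EuclideanSpace ℝ (Fin d), ψ x = 1)
    -- all moments of positive order vanish: `∫ x^α ψ(x) dx = 0` for `α ≠ 0`
    (hmom : ∀ α : Fin d → ℕ, α ≠ 0 →
      ∫ x : EuclideanSpace ℝ (Fin d), (∏ i, (x i) ^ (α i)) * ψ x = 0)
    (a b : ℕ) (hab : a < b) :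
    ∃ C : ℝ, 0 < C ∧ ∀ u : EuclideanSpace ℝ (Fin d) → ℂ,
      ContDiff ℝ (b : ℕ∞) u →
      (∀ m : ℕ, m ≤ b → ∃ K, ∀ x, ‖iteratedFDeriv ℝ m u x‖ ≤ K) →
      ∀ θ : ℝ, 1 ≤ θ →
        cNorm d a (fun x => u x - smoothOp d (fun y => ψ y) θ u x) ≤
          C * θ ^ (-((b : ℝ) - a)) * cNorm d b u := by
  let I p := ∫ y, ‖y‖ ^ p * |ψ y|
  have hI p : 0 ≤ I p := integral_nonneg fun y => by positivity
  have hC : 0 < ∑ p ∈ Finset.range (b + 1), I p + 1 := by positivity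
  set C := ∑ p ∈ Finset.range (b + 1), I p + 1
  have hIC p (hp : p ≤ b) : I p ≤ C := by
    linarith [Finset.single_le_sum (fun q _ => hI q) (Finset.mem_range.2 (Nat.lt_succ_of_le hp))]
  refine ⟨C, hC, fun u hu hbdd θ hθ => ?_⟩
  set K := cNorm d b u
  have hK k (hk : k ≤ b) y : ‖iteratedFDeriv ℝ k u y‖ ≤ K := norm_iteratedFDeriv_le_cNorm hbdd hk y
  have hK0 : 0 ≤ K := (norm_nonneg _).trans (hK 0 b.zero_le 0)
  rw [smoothOp_eq_convolution]
  refine cNorm_le (by positivity) fun m hm x => ?_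
  have hma : (m : ℝ) ≤ a := mod_cast hm
  calc _ ≤ K * ((θ ^ (b - m))⁻¹ * I (b - m)) :=
        norm_iteratedFDeriv_sub_convolution_scaledKer_le ψ hmean hmom (one_pos.trans_le hθ) hu hK
          (by omega) x
    _ ≤ K * (θ ^ (-((b : ℝ) - a)) * C) := by
        gcongr
        · exact inv_pow_le_rpow_neg hθ (by push_cast [Nat.cast_sub (by omega : m ≤ b)]; linarith)
        · exact hIC _ (by omega)
    _ = C * θ ^ (-((b : ℝ) - a)) * K := by ring

theorem smoothing_Ck_remainder_estimate
    (d : ℕ) (hd : 0 < d) (ψ : SchwartzMap (EuclideanSpace ℝ (Fin d)) ℝ)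
    (heven : ∀ x, ψ (-x) = ψ x)
    -- `∫ ψ = 1`
    (hmean : ∫ x : EuclideanSpace ℝ (Fin d), ψ x = 1)
    -- all moments of positive order vanish: `∫ x^α ψ(x) dx = 0` for `α ≠ 0`
    (hmom : ∀ α : Fin d → ℕ, α ≠ 0 →
      ∫ x : EuclideanSpace ℝ (Fin d), (∏ i, (x i) ^ (α i)) * ψ x = 0)
    (a b : ℕ) (hab : a < b) :
    ∃ C : ℝ, 0 < C ∧ ∀ u : EuclideanSpace ℝ (Fin d) → ℂ,
      ContDiff ℝ (b : ℕ∞) u →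
      (∀ m : ℕ, m ≤ b → ∃ K, ∀ x, ‖iteratedFDeriv ℝ m u x‖ ≤ K) →
      ∀ θ : ℝ, 1 ≤ θ →
        cNorm d a (fun x => u x - smoothOp d (fun y => ψ y) θ u x) ≤
          C * θ ^ (-((b : ℝ) - a)) * cNorm d b u :=
  smoothing_Ck_remainder_estimate_general d ψ hmean hmom a b hab

end
end
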